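/- For every sandpile s : V → ℤ and all i, z ∈ V, the map R_z intertwines the closed and open addition operators: R_z(a_i s) = â_i R_z(s). -/

import Mathlib

open scoped BigOperators
open Classical Filter

noncomputable section

namespace ThresholdState

variable {V : Type*} [Fintype V] [DecidableEq V]

/-- `A i j` is the number of directed edges from `i` to `j`. -/
def outdeg (A : V → V → ℕ) (i : V) : ℕ := ∑ j, A i j

def indeg (A : V → V → ℕ) (i : V) : ℕ := ∑ j, A j i

/-- Eulerian: out-degree equals in-degree at every vertex. -/
def Eulerian (A : V → V → ℕ) : Prop := ∀ i, outdeg A i = indeg A i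

/-- (Strongly) connected multigraph. -/
def Connected (A : V → V → ℕ) : Prop :=
  ∀ i j : V, Relation.ReflTransGen (fun a b => 0 < A a b) i j

def deg (A : V → V → ℕ) (i : V) : ℕ := outdeg A i

/-- Graph Laplacian: `Δu(i) = -deg(i)·u(i) + Σ_{e incoming to i} u(e⁻)`. -/
def lap (A : V → V → ℕ) (u : V → ℤ) (i : V) : ℤ :=
  -(deg A i : ℤ) * u i + ∑ j, (A j i : ℤ) * u j

def delta (z : V) : V → ℤ := fun j => if j = z then 1 else 0

/-- Toppling vertex `i`: replace `s` by `s + Δδ_i`. -/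
def toppleAt (A : V → V → ℕ) (s : V → ℤ) (i : V) : V → ℤ :=
  fun j => s j + lap A (delta i) j

def applySeq (A : V → V → ℕ) (s : V → ℤ) (l : List V) : V → ℤ :=
  l.foldl (toppleAt A) s

/-- A legal toppling sequence (avoiding the forbidden set `F`): each toppled
vertex is unstable when toppled and does not lie in `F`. -/
def ValidSeq (A : V → V → ℕ) (F : V → Prop) : (V → ℤ) → List V → Prop
  | _, [] => True
  | s, i :: l => ¬ F i ∧ (deg A i : ℤ) ≤ s i ∧ ValidSeq A F (toppleAt A s i) l

/-- Stable at every non-forbidden vertex. -/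
def StableOff (A : V → V → ℕ) (F : V → Prop) (s : V → ℤ) : Prop :=
  ∀ i, ¬ F i → s i ≤ (deg A i : ℤ) - 1

def StabilizesTo (A : V → V → ℕ) (F : V → Prop) (s : V → ℤ) (l : List V) : Prop :=
  ValidSeq A F s l ∧ StableOff A F (applySeq A s l)

def StabilizableVia (A : V → V → ℕ) (F : V → Prop) (s : V → ℤ) : Prop :=
  ∃ l, StabilizesTo A F s l

/-- Stabilizable with no forbidden vertices. -/
def Stabilizable (A : V → V → ℕ) (s : V → ℤ) : Prop :=
  StabilizableVia A (fun _ => False) s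

def stabSeq (A : V → V → ℕ) (F : V → Prop) (s : V → ℤ) : List V :=
  if h : StabilizableVia A F s then h.choose else []

def stabilizeVia (A : V → V → ℕ) (F : V → Prop) (s : V → ℤ) : V → ℤ :=
  applySeq A s (stabSeq A F s)

/-- Odometer: number of topplings at each vertex (`0` everywhere if not stabilizable). -/
def odometerVia (A : V → V → ℕ) (F : V → Prop) (s : V → ℤ) : V → ℕ :=
  fun i => (stabSeq A F s).count i

def sinkStabilize (A : V → V → ℕ) (z : V) (s : V → ℤ) : V → ℤ :=
  stabilizeVia A (fun i => i = z) s

def sinkOdometer (A : V → V → ℕ) (z : V) (s : V → ℤ) : V → ℕ :=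
  odometerVia A (fun i => i = z) s

/-- `ρ` is `z`-recurrent (Dhar's burning test): `ρ(z) = deg z`, `ρ(i) ≤ deg i - 1`
off the sink, and every site other than `z` topples exactly once in the
stabilization of `ρ + Δδ_z` with sink `z`. -/
def ZRec (A : V → V → ℕ) (z : V) (ρ : V → ℤ) : Prop :=
  ρ z = (deg A z : ℤ) ∧ (∀ i, i ≠ z → ρ i ≤ (deg A i : ℤ) - 1) ∧
  ∃ l : List V, StabilizesTo A (fun i => i = z) (fun j => ρ j + lap A (delta z) j) l ∧
    ∀ i, i ≠ z → l.count i = 1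

/-- `κ` = number of `z`-recurrent sandpiles. -/
def kappa (A : V → V → ℕ) (z : V) : ℕ := Nat.card {ρ : V → ℤ // ZRec A z ρ}

def totalMass (s : V → ℤ) : ℤ := ∑ i, s i

/-- Open addition operator `â_i` (with sink `z`). -/
def openAdd (A : V → V → ℕ) (z i : V) (ρ : V → ℤ) : V → ℤ :=
  fun j => if j = z then (deg A z : ℤ) else sinkStabilize A z (fun k => ρ k + delta i k) j

/-- `â_i⁻¹` on `Rec(z)`. -/
def openAddInv (A : V → V → ℕ) (z i : V) (ρ : V → ℤ) : V → ℤ :=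
  if h : ∃ ρ', ZRec A z ρ' ∧ openAdd A z i ρ' = ρ then h.choose else ρ

/-- Burst size `av_{i→z}(ρ) = |â_i⁻¹ρ| - |ρ| + 1`. -/
def burst (A : V → V → ℕ) (z i : V) (ρ : V → ℤ) : ℤ :=
  totalMass (openAddInv A z i ρ) - totalMass ρ + 1

/-- The `z`-recurrent decomposition `s = ρ + m·δ_z + Δv` with `ρ ∈ Rec(z)`, `v(z)=0`. -/
def ZDecomp (A : V → V → ℕ) (z : V) (s ρ : V → ℤ) (m : ℤ) (v : V → ℤ) : Prop :=
  ZRec A z ρ ∧ v z = 0 ∧ ∀ j, s j = ρ j + m * delta z j + lap A v j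

/-- `R_z(s)`: the `z`-recurrent representative of `s`. -/
def Rz (A : V → V → ℕ) (z : V) (s : V → ℤ) : V → ℤ :=
  if h : ∃ ρ, ∃ m, ∃ v, ZDecomp A z s ρ m v then h.choose else s

/-- `m_z(s)`: the integer in the `z`-recurrent decomposition of `s`. -/
def mz (A : V → V → ℕ) (z : V) (s : V → ℤ) : ℤ :=
  if h : ∃ m, ∃ ρ, ∃ v, ZDecomp A z s ρ m v then h.choose else 0

/-- Closed addition operator `a_i`. -/
def closedAdd (A : V → V → ℕ) (i : V) (s : V → ℤ) : V → ℤ :=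
  if Stabilizable A (fun j => s j + delta i j) then
    stabilizeVia A (fun _ => False) (fun j => s j + delta i j)
  else fun j => s j + delta i j

/-- The closed chain after making the additions listed in `w` (in order). -/
def chain (A : V → V → ℕ) (s0 : V → ℤ) (w : List V) : V → ℤ :=
  w.foldl (fun s i => closedAdd A i s) s0

/-- `w` is a threshold word for `s0`: the chain first becomes non-stabilizable
exactly after the additions in `w`, i.e. `τ = |w|` on the cylinder of `w`. -/
def IsThresholdWord (A : V → V → ℕ) (s0 : V → ℤ) (w : List V) : Prop :=
  ¬ Stabilizable A (chain A s0 w) ∧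
  ∀ w' : List V, w' <+: w → w' ≠ w → Stabilizable A (chain A s0 w')

def wordProb (α : V → ℝ) (w : List V) : ℝ := (w.map α).prod

/-- `P_{s0}(E at the threshold time)`: total probability of the (disjoint)
cylinders of threshold words satisfying `E`. -/
def thresholdProb (A : V → V → ℕ) (α : V → ℝ) (s0 : V → ℤ) (E : List V → Prop) : ℝ :=
  ∑' w : List V, if IsThresholdWord A s0 w ∧ E w then wordProb α w else 0

/-- `E_{s0}[f at the threshold time]`. -/
def thresholdExp (A : V → V → ℕ) (α : V → ℝ) (s0 : V → ℤ) (f : List V → ℝ) : ℝ :=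
  ∑' w : List V, if IsThresholdWord A s0 w then wordProb α w * f w else 0

end ThresholdState

/-!
Both sides of the identity are `z`-recurrent, and both differ from `s + δ_i` by an element of the
lattice `L_z` spanned by `δ_z` and the image of `Δ`; so they coincide once each class of
`(V → ℤ) / L_z` is known to contain exactly one recurrent sandpile.

Uniqueness: if `ρ' = ρ + Δv` off `z`, firing the sink of `ρ` `k` times lets every other vertex
topple `k` times and returns to `ρ`; for `k` large the least action principle forces
`v ≥ v z`, and by symmetry `v` is constant. Existence: iterate "fire the sink, then stabilize"
starting from `S_z(s)`. The iterates are bounded off `z`, hence eventually periodic; over a period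
the total odometer is harmonic, hence constant, and since every vertex topples at most once per
firing it topples exactly once, which is Dhar's burning test. That `â_i` preserves recurrence
follows from the abelian property.
-/

namespace ThresholdState

open Finset

variable {V : Type*} {A : V → V → ℕ}

section CountVec

variable [DecidableEq V]

def countVec (l : List V) : V → ℤ := fun w => l.count w

lemma countVec_cons (a : V) (l : List V) : countVec (a :: l) = delta a + countVec l := by
  ext w
  by_cases h : w = a
  · simp [countVec, delta, h, add_comm]
  · simp [countVec, delta, h, Ne.symm h]

lemma countVec_append (l₁ l₂ : List V) :
    countVec (l₁ ++ l₂) = countVec l₁ + countVec l₂ := by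
  ext w
  simp [countVec]

lemma countVec_nonneg (l : List V) : 0 ≤ countVec l := fun w => by simp [countVec]

end CountVec

variable [Fintype V]

def lapHom (A : V → V → ℕ) : (V → ℤ) →+ (V → ℤ) where
  toFun := lap A
  map_zero' := by ext; simp [lap]
  map_add' u v := by ext; simp only [lap, Pi.add_apply, mul_add, sum_add_distrib]; ring

lemma lap_add (u v : V → ℤ) : lap A (u + v) = lap A u + lap A v := (lapHom A).map_add u v

lemma lap_zero : lap A 0 = 0 := (lapHom A).map_zero

lemma lap_neg (u : V → ℤ) : lap A (-u) = -lap A u := (lapHom A).map_neg u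

lemma lap_sub (u v : V → ℤ) : lap A (u - v) = lap A u - lap A v := (lapHom A).map_sub u v

lemma lap_nsmul (k : ℕ) (u : V → ℤ) : lap A (k • u) = k • lap A u :=
  map_nsmul (lapHom A) k u

lemma sum_lap_apply (u : V → ℤ) : ∑ j, lap A u j = 0 := by
  simp only [lap, sum_add_distrib]
  rw [sum_comm]
  simp only [← sum_mul, deg, outdeg, Nat.cast_sum, neg_mul, sum_neg_distrib, neg_add_cancel]

lemma sum_in_eq_deg (hEul : Eulerian A) (i : V) : ∑ j, (A j i : ℤ) = deg A i := by
  rw [deg, hEul i, indeg, Nat.cast_sum]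

lemma lap_const (hEul : Eulerian A) (c : ℤ) : lap A (fun _ => c) = 0 := by
  ext i
  simp [lap, ← sum_mul, sum_in_eq_deg hEul]

/-- Maximum principle: the maximum of `W` propagates backwards along edges. -/
lemma eq_of_lap_eq_zero (hEul : Eulerian A) (hConn : Connected A) {W : V → ℤ}
    (h : lap A W = 0) (a b : V) : W a = W b := by
  obtain ⟨a₀, -, hmax⟩ := exists_max_image univ W ⟨a, mem_univ a⟩
  have pred_max : ∀ c k, 0 < A k c → W c = W a₀ → W k = W a₀ := by
    intro c k hk hc
    have hle : ∀ j ∈ univ, (A j c : ℤ) * W j ≤ A j c * W a₀ :=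
      fun j _ => mul_le_mul_of_nonneg_left (hmax j (mem_univ j)) (by positivity)
    have heq : ∑ j, (A j c : ℤ) * W j = ∑ j, (A j c : ℤ) * W a₀ := by
      have hc0 := congrFun h c
      simp only [lap, Pi.zero_apply] at hc0
      rw [← sum_mul, sum_in_eq_deg hEul, ← hc]
      linarith
    exact mul_left_cancel₀ (by positivity) ((sum_eq_sum_iff_of_le hle).mp heq k (mem_univ k))
  have all_max : ∀ c, W c = W a₀ := fun c => by
    induction hConn c a₀ using Relation.ReflTransGen.head_induction_on with
    | refl => rfl
    | head hkc _ ih => exact pred_max _ _ hkc ih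
  rw [all_max a, all_max b]

variable [DecidableEq V]

lemma lap_delta_apply (i j : V) :
    lap A (delta i) j = -(deg A j : ℤ) * delta i j + A i j := by
  simp [lap, delta]

lemma lap_delta_nonneg_of_ne {i j : V} (h : j ≠ i) : 0 ≤ lap A (delta i) j := by
  simp [lap_delta_apply, delta, h]

lemma lap_one_sub_delta (hEul : Eulerian A) (z : V) :
    lap A (1 - delta z) = -lap A (delta z) := by
  rw [lap_sub, show (1 : V → ℤ) = fun _ => 1 from rfl, lap_const hEul, zero_sub]

lemma lap_eq_zero_of_eq_zero_off {W : V → ℤ} {z : V} (h : ∀ j, j ≠ z → lap A W j = 0) :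
    lap A W = 0 := by
  ext j
  rcases eq_or_ne j z with rfl | hj
  · have hsum := sum_lap_apply (A := A) W
    rwa [← add_sum_erase _ _ (mem_univ j),
      sum_eq_zero fun k hk => h k (ne_of_mem_erase hk), add_zero] at hsum
  · exact h j hj

section Toppling

variable {F : V → Prop}

lemma applySeq_append (s : V → ℤ) (l₁ l₂ : List V) :
    applySeq A s (l₁ ++ l₂) = applySeq A (applySeq A s l₁) l₂ :=
  List.foldl_append

lemma applySeq_eq_add_lap (s : V → ℤ) (l : List V) :
    applySeq A s l = s + lap A (countVec l) := by
  induction l generalizing s with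
  | nil => ext; simp [applySeq, countVec, lap]
  | cons a l ih =>
    rw [show applySeq A s (a :: l) = applySeq A (s + lap A (delta a)) l from rfl, ih,
      countVec_cons, lap_add, add_assoc]

lemma applySeq_add (s t : V → ℤ) (l : List V) :
    applySeq A (s + t) l = applySeq A s l + t := by
  simp only [applySeq_eq_add_lap]
  abel

lemma stabilizeVia_eq (s : V → ℤ) :
    stabilizeVia A F s = s + lap A (countVec (stabSeq A F s)) :=
  applySeq_eq_add_lap s _

namespace ValidSeq

variable {s t : V → ℤ} {l l₁ l₂ : List V}

lemma count_eq_zero (h : ValidSeq A F s l) {i : V} (hi : F i) : l.count i = 0 := by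
  induction l generalizing s with
  | nil => rfl
  | cons a l ih =>
    obtain ⟨ha, -, hl⟩ := h
    have hai : a ≠ i := fun hai => ha (hai ▸ hi)
    simp [hai, ih hl]

lemma append (h₁ : ValidSeq A F s l₁) (h₂ : ValidSeq A F (applySeq A s l₁) l₂) :
    ValidSeq A F s (l₁ ++ l₂) := by
  induction l₁ generalizing s with
  | nil => exact h₂
  | cons a l ih =>
    obtain ⟨ha, hd, hl⟩ := h₁
    exact ⟨ha, hd, ih hl h₂⟩

lemma mono (h : ValidSeq A F s l) (hst : ∀ j, ¬ F j → s j ≤ t j) : ValidSeq A F t l := by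
  induction l generalizing s t with
  | nil => trivial
  | cons a l ih =>
    obtain ⟨ha, hd, hl⟩ := h
    exact ⟨ha, hd.trans (hst a ha), ih hl fun j hj => by simpa [toppleAt] using hst j hj⟩

/-- Least action principle. -/
lemma countVec_le (h : ValidSeq A F s l) {w : V → ℤ} (hw : 0 ≤ w)
    (hstab : StableOff A F (s + lap A w)) : countVec l ≤ w := by
  induction l generalizing s w with
  | nil => intro j; simpa [countVec] using hw j
  | cons a l ih =>
    obtain ⟨ha, hd, hl⟩ := h
    have hwa : 1 ≤ w a := by
      by_contra! hwa
      have hwa0 : w a = 0 := le_antisymm (by omega) (hw a)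
      have hlap : 0 ≤ lap A w a := by
        rw [lap, hwa0, mul_zero, zero_add]
        exact sum_nonneg fun j _ => mul_nonneg (by positivity) (hw j)
      have := hstab a ha
      simp only [Pi.add_apply] at this
      omega
    have hw' : 0 ≤ w - delta a := fun j => by
      by_cases hj : j = a
      · simp [delta, hj, hwa]
      · simpa [delta, hj] using hw j
    have hstab' : StableOff A F (toppleAt A s a + lap A (w - delta a)) := by
      convert hstab using 1
      rw [show toppleAt A s a = s + lap A (delta a) from rfl, lap_sub]
      abel
    intro j
    have := ih hl hw' hstab' j
    simp only [countVec_cons, Pi.add_apply, Pi.sub_apply] at this ⊢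
    omega

end ValidSeq

namespace StabilizesTo

variable {s t : V → ℤ} {l l₁ l₂ : List V}

lemma congr (h : StabilizesTo A F s l) (hst : ∀ j, ¬ F j → s j = t j) :
    StabilizesTo A F t l := by
  refine ⟨h.1.mono fun j hj => (hst j hj).le, fun j hj => ?_⟩
  have := h.2 j hj
  simp only [applySeq_eq_add_lap, Pi.add_apply, hst j hj] at this ⊢
  exact this

lemma append (h₁ : ValidSeq A F s l₁) (h₂ : StabilizesTo A F (applySeq A s l₁) l₂) :
    StabilizesTo A F s (l₁ ++ l₂) :=
  ⟨h₁.append h₂.1, by rw [applySeq_append]; exact h₂.2⟩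

/-- Abelian property of stabilization. -/
lemma countVec_eq (h : StabilizesTo A F s l₁) (h' : StabilizesTo A F s l₂) :
    countVec l₁ = countVec l₂ := by
  refine le_antisymm (h.1.countVec_le (countVec_nonneg _) ?_)
    (h'.1.countVec_le (countVec_nonneg _) ?_)
  · rw [← applySeq_eq_add_lap]; exact h'.2
  · rw [← applySeq_eq_add_lap]; exact h.2

end StabilizesTo

end Toppling

section Termination

variable {F : V → Prop} {z : V} {s : V → ℤ} {l : List V}

lemma ValidSeq.min_le_applySeq (h : ValidSeq A F s l) (j : V) :
    min (s j) 0 ≤ applySeq A s l j := by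
  induction l generalizing s with
  | nil => exact min_le_left _ _
  | cons a l ih =>
    obtain ⟨-, hd, hl⟩ := h
    refine le_trans (le_min ?_ (min_le_right _ _)) (ih hl)
    have hA : (0 : ℤ) ≤ A a j := by positivity
    simp only [toppleAt, lap_delta_apply]
    rcases eq_or_ne j a with rfl | hja
    · rw [show delta j j = 1 from if_pos rfl]
      omega
    · rw [show delta a j = 0 from if_neg hja]
      omega

lemma ValidSeq.applySeq_le_sum (h : ValidSeq A F s l) (c : V) :
    applySeq A s l c ≤ ∑ j, max (s j) 0 := by
  have hmass : ∑ j, applySeq A s l j = ∑ j, s j := by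
    simp [applySeq_eq_add_lap, sum_add_distrib, sum_lap_apply]
  have hsingle : applySeq A s l c - min (s c) 0 ≤ ∑ j, (applySeq A s l j - min (s j) 0) :=
    single_le_sum (fun j _ => sub_nonneg.2 (h.min_le_applySeq j)) (mem_univ c)
  have hsum : ∑ j, (applySeq A s l j - min (s j) 0) = ∑ j, max (s j) 0 := by
    rw [sum_sub_distrib, hmass, ← sum_sub_distrib]
    exact sum_congr rfl fun j _ => by omega
  have := min_le_right (s c) 0
  linarith

/-- Induction along a path to the sink: every toppling of `a` sends a chip to its out-neighbour
`c`, whose height stays bounded, so `a` topples boundedly often if `c` does. -/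
lemma exists_count_bound (hConn : Connected A) (s : V → ℤ) (w : V) :
    ∃ B : ℤ, ∀ l, ValidSeq A (· = z) s l → countVec l w ≤ B := by
  induction hConn w z using Relation.ReflTransGen.head_induction_on with
  | refl => exact ⟨0, fun l hl => by simp [countVec, hl.count_eq_zero rfl]⟩
  | @head a c hac _ ih =>
    obtain ⟨B, hB⟩ := ih
    refine ⟨∑ j, max (s j) 0 - s c + deg A c * B, fun l hl => ?_⟩
    have hin : ∑ k, (A k c : ℤ) * countVec l k
        = applySeq A s l c - s c + deg A c * countVec l c := by
      rw [applySeq_eq_add_lap]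
      simp only [Pi.add_apply, lap]
      ring
    have hsingle : (A a c : ℤ) * countVec l a ≤ ∑ k, (A k c : ℤ) * countVec l k :=
      single_le_sum (f := fun k => (A k c : ℤ) * countVec l k)
        (fun k _ => mul_nonneg (by positivity) (countVec_nonneg l k)) (mem_univ a)
    have hA : (1 : ℤ) ≤ A a c := by exact_mod_cast hac
    have := hl.applySeq_le_sum c
    have := mul_le_mul_of_nonneg_left (hB l hl) (show (0 : ℤ) ≤ deg A c by positivity)
    have := mul_le_mul_of_nonneg_right hA (countVec_nonneg l a)
    linarith

lemma length_eq_sum_countVec (l : List V) : (l.length : ℤ) = ∑ w, countVec l w := by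
  rw [← List.sum_toFinset_count_eq_length, Nat.cast_sum]
  exact sum_subset (subset_univ _) fun w _ hw => by simpa [countVec, List.count_eq_zero] using hw

lemma stabilizableVia_of_length_le {N : ℕ} (hN : ∀ l, ValidSeq A F s l → l.length ≤ N) :
    StabilizableVia A F s := by
  by_contra hns
  have hlong : ∀ k, ∃ l, ValidSeq A F s l ∧ l.length = k := by
    intro k
    induction k with
    | zero => exact ⟨[], trivial, rfl⟩
    | succ k ih =>
      obtain ⟨l, hl, rfl⟩ := ih
      obtain ⟨i, hiF, hi⟩ : ∃ i, ¬ F i ∧ (deg A i : ℤ) ≤ applySeq A s l i := by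
        by_contra! hst
        exact hns ⟨l, hl, fun i hi => by have := hst i hi; omega⟩
      exact ⟨l ++ [i], hl.append ⟨hiF, hi, trivial⟩, by simp⟩
  obtain ⟨l, hl, hlen⟩ := hlong (N + 1)
  have := hN l hl
  omega

lemma stabilizableVia_sink (hConn : Connected A) (s : V → ℤ) :
    StabilizableVia A (· = z) s := by
  choose B hB using exists_count_bound (z := z) hConn s
  refine stabilizableVia_of_length_le (N := (∑ w, B w).toNat) fun l hl => ?_
  have := sum_le_sum fun w (_ : w ∈ univ) => hB w l hl
  rw [← length_eq_sum_countVec] at this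
  omega

lemma stabilizesTo_stabSeq (hConn : Connected A) (s : V → ℤ) :
    StabilizesTo A (· = z) s (stabSeq A (· = z) s) := by
  have h := stabilizableVia_sink (z := z) hConn s
  rw [stabSeq, dif_pos h]
  exact h.choose_spec

end Termination

section Lattice

variable {F : V → Prop} {z : V}

def sinkLattice (A : V → V → ℕ) (z : V) : AddSubgroup (V → ℤ) :=
  AddSubgroup.zmultiples (delta z) ⊔ (lapHom A).range

lemma mem_sinkLattice {x : V → ℤ} :
    x ∈ sinkLattice A z ↔ ∃ (m : ℤ) (v : V → ℤ), m • delta z + lap A v = x := by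
  simp only [sinkLattice, AddSubgroup.mem_sup, AddSubgroup.mem_zmultiples_iff,
    AddMonoidHom.mem_range]
  constructor
  · rintro ⟨_, ⟨m, rfl⟩, _, ⟨v, rfl⟩, rfl⟩
    exact ⟨m, v, rfl⟩
  · rintro ⟨m, v, rfl⟩
    exact ⟨_, ⟨m, rfl⟩, _, ⟨v, rfl⟩, rfl⟩

lemma lap_mem_sinkLattice (v : V → ℤ) : lap A v ∈ sinkLattice A z :=
  AddSubgroup.mem_sup_right ⟨v, rfl⟩

lemma update_sub_mem_sinkLattice (τ : V → ℤ) (c : ℤ) :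
    Function.update τ z c - τ ∈ sinkLattice A z := by
  refine AddSubgroup.mem_sup_left ⟨c - τ z, funext fun j => ?_⟩
  rcases eq_or_ne j z with rfl | hj
  · simp [delta]
  · simp [delta, hj]

lemma stabilizeVia_sub_mem_sinkLattice (s : V → ℤ) :
    stabilizeVia A F s - s ∈ sinkLattice A z := by
  rw [stabilizeVia_eq, add_sub_cancel_left]
  exact lap_mem_sinkLattice _

lemma closedAdd_sub_mem_sinkLattice (i : V) (s : V → ℤ) :
    closedAdd A i s - (s + delta i) ∈ sinkLattice A z := by
  unfold closedAdd
  split_ifs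
  · exact stabilizeVia_sub_mem_sinkLattice (s + delta i)
  · exact (sub_self (s + delta i)).symm ▸ zero_mem _

lemma openAdd_eq_update (i : V) (ρ : V → ℤ) :
    openAdd A z i ρ = Function.update (sinkStabilize A z (ρ + delta i)) z (deg A z) := by
  funext j
  simp only [openAdd, Function.update_apply]
  rfl

lemma openAdd_sub_mem_sinkLattice (i : V) (ρ : V → ℤ) :
    openAdd A z i ρ - (ρ + delta i) ∈ sinkLattice A z := by
  rw [openAdd_eq_update, ← sub_add_sub_cancel _ (sinkStabilize A z (ρ + delta i))]
  exact add_mem (update_sub_mem_sinkLattice _ _) (stabilizeVia_sub_mem_sinkLattice _)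

end Lattice

section Recurrence

variable {z : V} {ρ ρ' τ : V → ℤ} {l : List V}

/-- Toppling every vertex but `z` once undoes the firing of the sink, so least action bounds
the odometer by `1 - δ_z`. -/
lemma ValidSeq.countVec_le_one_sub_delta (hEul : Eulerian A) (hτ : StableOff A (· = z) τ)
    (hl : ValidSeq A (· = z) (τ + lap A (delta z)) l) : countVec l ≤ 1 - delta z := by
  refine hl.countVec_le (fun j => ?_) ?_
  · by_cases hj : j = z <;> simp [delta, hj]
  · rwa [lap_one_sub_delta hEul, add_neg_cancel_right]

lemma ZRec.exists_burn (hρ : ZRec A z ρ) :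
    ∃ l, StabilizesTo A (· = z) (ρ + lap A (delta z)) l ∧ countVec l = 1 - delta z := by
  obtain ⟨-, -, l, hl, hcount⟩ := hρ
  refine ⟨l, hl, funext fun j => ?_⟩
  rcases eq_or_ne j z with rfl | hj
  · simp [countVec, delta, hl.1.count_eq_zero rfl]
  · simp [countVec, delta, hj, hcount j hj]

lemma zrec_update (hτ : StableOff A (· = z) τ)
    (hl : StabilizesTo A (· = z) (τ + lap A (delta z)) l) (hcount : countVec l = 1 - delta z) :
    ZRec A z (Function.update τ z (deg A z)) := by
  refine ⟨by simp, fun j hj => by simpa [hj] using hτ j hj, l,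
    hl.congr fun j hj => by simp [hj], fun j hj => ?_⟩
  have := congrFun hcount j
  simp only [countVec, Pi.sub_apply, Pi.one_apply, delta, if_neg hj, sub_zero] at this
  exact_mod_cast this

lemma ZRec.exists_nsmul_burn (hEul : Eulerian A) (hρ : ZRec A z ρ) (k : ℕ) :
    ∃ l, ValidSeq A (· = z) (ρ + k • lap A (delta z)) l ∧
      countVec l = k • (1 - delta z) := by
  obtain ⟨lb, hlb, hcount⟩ := hρ.exists_burn
  induction k with
  | zero => exact ⟨[], trivial, by ext; simp [countVec]⟩
  | succ k ih =>
    obtain ⟨l, hl, hlc⟩ := ih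
    have hstep : applySeq A (ρ + (k + 1) • lap A (delta z)) lb = ρ + k • lap A (delta z) := by
      rw [applySeq_eq_add_lap, hcount, lap_one_sub_delta hEul, succ_nsmul]
      abel
    refine ⟨lb ++ l, (hlb.1.mono fun j hj => ?_).append (hstep ▸ hl), ?_⟩
    · have := lap_delta_nonneg_of_ne (A := A) hj
      simp only [Pi.add_apply, Pi.smul_apply, succ_nsmul]
      linarith [nsmul_nonneg this k]
    · rw [countVec_append, hcount, hlc, succ_nsmul, add_comm]

/-- Firing the sink of `ρ` `k` times makes every other vertex topple `k` times. The odometer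
`k • (1 - δ_z) + v - v z` leads to `ρ'` off `z`, so for large `k` least action gives
`k ≤ k + v j - v z`. -/
lemma ZRec.le_of_eq_add_lap (hEul : Eulerian A) (hρ : ZRec A z ρ) (hρ' : ZRec A z ρ')
    {v : V → ℤ} (hrel : ∀ j, j ≠ z → ρ' j = ρ j + lap A v j) (j : V) : v z ≤ v j := by
  obtain ⟨K, hK⟩ := Finite.exists_le fun j => v z - v j
  set k := K.toNat
  obtain ⟨l, hl, hlc⟩ := hρ.exists_nsmul_burn hEul k
  have hw : 0 ≤ k • (1 - delta z) + (v - fun _ => v z) := fun j => by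
    have := hK j
    rcases eq_or_ne j z with rfl | hj
    · simp [delta]
    · simp [delta, hj]
      omega
  have hstab : StableOff A (· = z)
      (ρ + k • lap A (delta z) + lap A (k • (1 - delta z) + (v - fun _ => v z))) := by
    rw [lap_add, lap_nsmul, lap_one_sub_delta hEul, lap_sub, lap_const hEul]
    intro j hj
    have := hρ'.2.1 j hj
    rw [hrel j hj] at this
    simpa using this
  have := hl.countVec_le hw hstab j
  rw [hlc] at this
  rcases eq_or_ne j z with rfl | hj
  · exact le_rfl
  · simpa [delta, hj] using this

lemma ZRec.eq_of_sub_mem (hEul : Eulerian A) (hρ : ZRec A z ρ) (hρ' : ZRec A z ρ')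
    (h : ρ' - ρ ∈ sinkLattice A z) : ρ' = ρ := by
  obtain ⟨m, v, hmv⟩ := mem_sinkLattice.1 h
  have hoff : ∀ j, j ≠ z → ρ' j = ρ j + lap A v j := fun j hj => by
    have := congrFun hmv j
    simp only [Pi.add_apply, Pi.smul_apply, Pi.sub_apply, delta, if_neg hj, smul_zero] at this
    linarith
  have hoff' : ∀ j, j ≠ z → ρ j = ρ' j + lap A (-v) j := fun j hj => by
    rw [lap_neg]
    simp only [Pi.neg_apply]
    linarith [hoff j hj]
  have hv : v = fun _ => v z := funext fun j =>
    le_antisymm (by simpa using hρ'.le_of_eq_add_lap hEul hρ hoff' j)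
      (hρ.le_of_eq_add_lap hEul hρ' hoff j)
  have hlap : lap A v = 0 := by rw [hv]; exact lap_const hEul _
  have hm : m = 0 := by
    have := congrFun hmv z
    simpa [hlap, delta, hρ.1, hρ'.1] using this
  ext j
  have := congrFun hmv j
  simp only [hlap, hm, zero_smul, add_zero, Pi.zero_apply, Pi.sub_apply] at this
  linarith

end Recurrence

section OpenAddition

variable {z : V} {ρ : V → ℤ}

/-- Both orders of "fire the sink" and "stabilize `ρ + δ_i`" stabilize the same sandpile, so by
the abelian property the burning odometer of `â_i ρ` equals that of `ρ`. -/
lemma ZRec.openAdd (hEul : Eulerian A) (hConn : Connected A) (hρ : ZRec A z ρ) (i : V) :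
    ZRec A z (openAdd A z i ρ) := by
  obtain ⟨lb, hlb, hlbc⟩ := hρ.exists_burn
  set D := sinkStabilize A z (ρ + delta i)
  have hc := stabilizesTo_stabSeq (z := z) hConn (ρ + delta i)
  have hD := stabilizesTo_stabSeq (z := z) hConn (D + lap A (delta z))
  have hδ : 0 ≤ delta (V := V) i := fun j => by unfold delta; split_ifs <;> norm_num
  have h₁ : StabilizesTo A (· = z) (ρ + delta i + lap A (delta z))
      (lb ++ stabSeq A (· = z) (ρ + delta i)) := by
    refine .append (hlb.1.mono fun j _ => by simpa using hδ j) ?_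
    have : applySeq A (ρ + delta i + lap A (delta z)) lb = ρ + delta i := by
      rw [applySeq_eq_add_lap, hlbc, lap_one_sub_delta hEul]
      abel
    rwa [this]
  have h₂ : StabilizesTo A (· = z) (ρ + delta i + lap A (delta z))
      (stabSeq A (· = z) (ρ + delta i) ++ stabSeq A (· = z) (D + lap A (delta z))) := by
    refine .append (hc.1.mono fun j hj => by simp [lap_delta_nonneg_of_ne hj]) ?_
    rw [applySeq_add]
    exact hD
  have hcount : countVec (stabSeq A (· = z) (D + lap A (delta z))) = 1 - delta z := by
    have := h₁.countVec_eq h₂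
    rw [countVec_append, countVec_append, hlbc, add_comm (countVec _)] at this
    exact (add_right_cancel this).symm
  rw [openAdd_eq_update]
  exact zrec_update hc.2 hD hcount

end OpenAddition

section Existence

variable {z : V}

/-- Over one period the total odometer `∑ (δ_z + u k)` is harmonic, hence constant; as
`u k ≤ 1` off `z`, this forces every `u k` to be `1` there. -/
lemma eq_one_sub_delta_of_periodic (hEul : Eulerian A) (hConn : Connected A)
    {τ u : ℕ → V → ℤ} (hstep : ∀ k, τ (k + 1) = τ k + lap A (delta z + u k))
    (hu0 : ∀ k, 0 ≤ u k) (hu1 : ∀ k, u k ≤ 1 - delta z) {a n : ℕ} (hn : 0 < n)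
    (hper : ∀ j, j ≠ z → τ (a + n) j = τ a j) : u a = 1 - delta z := by
  have htel : ∀ n, τ (a + n) = τ a + lap A (∑ m ∈ range n, (delta z + u (a + m))) := by
    intro n
    induction n with
    | zero => simp [lap_zero]
    | succ n ih => rw [← add_assoc, hstep, ih, sum_range_succ, lap_add _ (delta z + _), add_assoc]
  have hW : lap A (∑ m ∈ range n, (delta z + u (a + m))) = 0 :=
    lap_eq_zero_of_eq_zero_off (z := z) fun j hj => by
      simpa [hper j hj] using congrFun (htel n) j
  have huz : ∀ k, u k z = 0 := fun k => le_antisymm (by simpa [delta] using hu1 k z) (hu0 k z)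
  have hu1' : ∀ k j, j ≠ z → u k j ≤ 1 := fun k j hj => by simpa [delta, hj] using hu1 k j
  ext j
  rcases eq_or_ne j z with rfl | hj
  · simp [delta, huz]
  · have hconst := eq_of_lap_eq_zero hEul hConn hW z j
    simp only [Finset.sum_apply, Pi.add_apply, delta, if_pos, if_neg hj, huz, zero_add, add_zero,
      sum_const, card_range, nsmul_eq_mul, mul_one] at hconst
    have hsum : ∑ m ∈ range n, (1 - u (a + m) j) = 0 := by
      rw [sum_sub_distrib, ← hconst]
      simp
    have := (sum_eq_zero_iff_of_nonneg fun m _ => sub_nonneg.2 (hu1' (a + m) j hj)).1 hsum 0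
      (mem_range.2 hn)
    simp only [add_zero] at this
    simp [delta, hj]
    linarith

def burnOrbit (A : V → V → ℕ) (z : V) (s : V → ℤ) : ℕ → V → ℤ
  | 0 => sinkStabilize A z s
  | k + 1 => sinkStabilize A z (burnOrbit A z s k + lap A (delta z))

variable (s : V → ℤ)

lemma burnOrbit_succ (k : ℕ) :
    burnOrbit A z s (k + 1) = burnOrbit A z s k
      + lap A (delta z + countVec (stabSeq A (· = z) (burnOrbit A z s k + lap A (delta z)))) := by
  rw [burnOrbit, sinkStabilize, stabilizeVia_eq, lap_add, add_assoc]

lemma burnOrbit_stableOff (hConn : Connected A) (k : ℕ) :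
    StableOff A (· = z) (burnOrbit A z s k) := by
  cases k <;> exact (stabilizesTo_stabSeq hConn _).2

lemma burnOrbit_sub_mem_sinkLattice (k : ℕ) : burnOrbit A z s k - s ∈ sinkLattice A z := by
  induction k with
  | zero => exact stabilizeVia_sub_mem_sinkLattice s
  | succ k ih =>
    rw [burnOrbit_succ, add_sub_right_comm]
    exact add_mem ih (lap_mem_sinkLattice _)

lemma min_le_burnOrbit (hConn : Connected A) (k : ℕ) {j : V} (hj : j ≠ z) :
    min (burnOrbit A z s 0 j) 0 ≤ burnOrbit A z s k j := by
  induction k with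
  | zero => exact min_le_left _ _
  | succ k ih =>
    have hmin := (stabilizesTo_stabSeq (z := z) hConn
      (burnOrbit A z s k + lap A (delta z))).1.min_le_applySeq j
    have := lap_delta_nonneg_of_ne (A := A) hj
    simp only [Pi.add_apply] at hmin
    change _ ≤ applySeq A _ _ j
    omega

lemma exists_burnOrbit_periodic (hConn : Connected A) :
    ∃ a n, 0 < n ∧ ∀ j, j ≠ z → burnOrbit A z s (a + n) j = burnOrbit A z s a j := by
  have hbox : ∀ k, Function.update (burnOrbit A z s k) z 0
      ∈ Set.univ.pi fun j => Set.Icc (min (burnOrbit A z s 0 j) 0) (deg A j) := by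
    intro k j _
    rcases eq_or_ne j z with rfl | hj
    · simp
    · have := burnOrbit_stableOff s hConn k j hj
      simp only [Function.update_of_ne hj, Set.mem_Icc]
      exact ⟨min_le_burnOrbit s hConn k hj, by omega⟩
  obtain ⟨a, b, hab, heq⟩ :=
    Set.Finite.exists_lt_map_eq_of_forall_mem hbox (Set.Finite.pi fun j => Set.finite_Icc _ _)
  refine ⟨a, b - a, by omega, fun j hj => ?_⟩
  rw [Nat.add_sub_cancel' hab.le]
  simpa [hj] using (congrFun heq j).symm

theorem exists_zrec_sub_mem_sinkLattice (hEul : Eulerian A) (hConn : Connected A) :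
    ∃ ρ, ZRec A z ρ ∧ s - ρ ∈ sinkLattice A z := by
  obtain ⟨a, n, hn, hper⟩ := exists_burnOrbit_periodic s hConn
  have hburn := eq_one_sub_delta_of_periodic hEul hConn (burnOrbit_succ s)
    (fun _ => countVec_nonneg _)
    (fun k => (stabilizesTo_stabSeq hConn _).1.countVec_le_one_sub_delta hEul
      (burnOrbit_stableOff s hConn k)) hn hper
  refine ⟨Function.update (burnOrbit A z s a) z (deg A z),
    zrec_update (burnOrbit_stableOff s hConn a) (stabilizesTo_stabSeq hConn _) hburn, ?_⟩
  have := add_mem (update_sub_mem_sinkLattice (A := A) (z := z) (burnOrbit A z s a) (deg A z))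
    (burnOrbit_sub_mem_sinkLattice (z := z) s a)
  rw [sub_add_sub_cancel] at this
  simpa using neg_mem this

end Existence

section Representative

variable {z : V} {s ρ : V → ℤ}

lemma ZDecomp.sub_mem_sinkLattice {m : ℤ} {v : V → ℤ} (h : ZDecomp A z s ρ m v) :
    s - ρ ∈ sinkLattice A z :=
  mem_sinkLattice.2 ⟨m, v, funext fun j => by simp [h.2.2 j]; ring⟩

lemma exists_zdecomp_of_sub_mem (hEul : Eulerian A) (hρ : ZRec A z ρ)
    (h : s - ρ ∈ sinkLattice A z) : ∃ m v, ZDecomp A z s ρ m v := by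
  obtain ⟨m, v, hmv⟩ := mem_sinkLattice.1 h
  refine ⟨m, v - fun _ => v z, hρ, by simp, fun j => ?_⟩
  rw [lap_sub, lap_const hEul, sub_zero]
  have := congrFun hmv j
  simp only [Pi.add_apply, Pi.smul_apply, Pi.sub_apply, smul_eq_mul] at this
  linarith

lemma Rz_eq_of_sub_mem (hEul : Eulerian A) (hρ : ZRec A z ρ) (h : s - ρ ∈ sinkLattice A z) :
    Rz A z s = ρ := by
  have hex : ∃ ρ m v, ZDecomp A z s ρ m v := ⟨ρ, exists_zdecomp_of_sub_mem hEul hρ h⟩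
  obtain ⟨m, v, hdec⟩ := hex.choose_spec
  rw [Rz, dif_pos hex]
  refine hρ.eq_of_sub_mem hEul hdec.1 ?_
  simpa using sub_mem h hdec.sub_mem_sinkLattice

end Representative

end ThresholdState

open ThresholdState in
/-- `R_z` intertwines the closed and open addition operators:
`R_z(a_i s) = â_i R_z(s)`. -/
theorem statement_10 {V : Type*} [Fintype V] [DecidableEq V]
    (A : V → V → ℕ) (hEul : Eulerian A) (hConn : Connected A)
    (s : V → ℤ) (i z : V) :
    Rz A z (closedAdd A i s) = openAdd A z i (Rz A z s) := by
  obtain ⟨ρ, hρ, hsρ⟩ := exists_zrec_sub_mem_sinkLattice (z := z) s hEul hConn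
  rw [Rz_eq_of_sub_mem hEul hρ hsρ]
  refine Rz_eq_of_sub_mem hEul (hρ.openAdd hEul hConn i) ?_
  have := add_mem (sub_mem (closedAdd_sub_mem_sinkLattice (A := A) (z := z) i s)
    (openAdd_sub_mem_sinkLattice i ρ)) hsρ
  convert this using 1
  abel
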